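/- After clearing denominators, the identity $(t^{\sum_i n_i}-1)\prod_{l=2}^N (t^{n_l}x_1 - t^{n_1}x_l) = (1-t^{-n_1})\,t^{\sum_i n_i}\prod_{l=2}^N (x_1 - t^{n_1}x_l) - t^{\sum_i n_i}\sum_{j=2}^N (1-t^{-n_j})(x_j - t^{n_j}x_1)\prod_{l=2,l\neq j}^N (t^{n_l}x_1 - t^{n_1}x_l)\frac{x_j - t^{n_j}x_l}{t^{n_l}x_j - t^{n_j}x_l}$ holds as an identity of rational functions in $x_1$. -/

import Mathlib

/-!
Put `σ l = t ^ n l` and `u l = σ 1 * x l / σ l` for `l ≥ 2`; `hden` says that these nodes are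
distinct. Writing `x j - σ j * y = (1 - σ 1) * x j - σ j * (y - u j)` splits the `j`-th summand in
two. The first parts add up to the Lagrange interpolant at the nodes of `∏ l, (y - σ l * u l)`,
which is that product minus the nodal polynomial `∏ l, (y - u l)`, both being monic of the same
degree. The second parts add up to the nodal polynomial times
`∑ j, (σ j - 1) * ∏ l ≠ j, (u j - σ l * u l) / (u j - u l)`, and this sum is `∏ l, σ l - 1`:
by induction on the nodes, expanding `∏ l, (w - σ l * u l) / (w - u l)` into partial fractions at
the new node `w`.
-/

open Finset Polynomial Lagrange

theorem zpow_sum₀ {G₀ ι : Type*} [CommGroupWithZero G₀] {t : G₀} (ht : t ≠ 0) (s : Finset ι)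
    (n : ι → ℤ) : t ^ (∑ i ∈ s, n i) = ∏ i ∈ s, t ^ n i := by
  induction s using Finset.cons_induction with
  | empty => simp
  | cons i s hi ih => rw [sum_cons, prod_cons, zpow_add₀ ht, ih]

section

variable {K : Type*} [Field K] {ι : Type*} [DecidableEq ι]

theorem prod_sub_eq_prod_sub_add_sum_mul_prod_div {s : Finset ι} {u : ι → K}
    (hu : Set.InjOn u s) (c : ι → K) (w : K) :
    ∏ l ∈ s, (w - c l) = ∏ l ∈ s, (w - u l)
      + ∑ j ∈ s, (∏ l ∈ s, (u j - c l)) * ∏ l ∈ s.erase j, (w - u l) / (u j - u l) := by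
  have hdeg : (nodal s c - nodal s u).degree < #s := by
    have := degree_sub_lt_left (p := nodal s c) (q := nodal s u)
      (by rw [degree_nodal, degree_nodal]) nodal_ne_zero
      (by rw [nodal_monic.leadingCoeff, nodal_monic.leadingCoeff])
    rwa [degree_nodal] at this
  have h := congrArg (eval w) (eq_interpolate hu hdeg)
  rw [interpolate_apply, eval_finsetSum, eval_sub, eval_nodal, eval_nodal] at h
  rw [← sub_eq_iff_eq_add', h]
  refine sum_congr rfl fun j hj => ?_
  rw [eval_mul, eval_C, eval_sub, eval_nodal, eval_nodal_at_node hj, sub_zero, Lagrange.basis,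
    eval_prod]
  congr 1
  refine prod_congr rfl fun l _ => ?_
  rw [basisDivisor, eval_mul, eval_C, eval_sub, eval_X, eval_C, div_eq_inv_mul]

theorem prod_sub_div_sub_eq_one_add_sum {s : Finset ι} {u : ι → K} (hu : Set.InjOn u s)
    (c : ι → K) {w : K} (hw : ∀ l ∈ s, w ≠ u l) :
    ∏ l ∈ s, (w - c l) / (w - u l)
      = 1 + ∑ j ∈ s, (u j - c j) / (w - u j) * ∏ l ∈ s.erase j, (u j - c l) / (u j - u l) := by
  have hW : ∏ l ∈ s, (w - u l) ≠ 0 := prod_ne_zero_iff.2 fun l hl => sub_ne_zero.2 (hw l hl)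
  rw [prod_div_distrib, prod_sub_eq_prod_sub_add_sum_mul_prod_div hu c w, add_div, div_self hW,
    sum_div]
  congr 1
  refine sum_congr rfl fun j hj => ?_
  have hF : ∏ l ∈ s.erase j, (w - u l) ≠ 0 :=
    prod_ne_zero_iff.2 fun l hl => sub_ne_zero.2 (hw l (mem_of_mem_erase hl))
  rw [← mul_prod_erase s _ hj, ← mul_prod_erase s (fun l => w - u l) hj, prod_div_distrib,
    prod_div_distrib]
  field_simp

theorem sum_sub_one_mul_prod_div_eq_prod_sub_one {s : Finset ι} {u : ι → K}
    (hu : Set.InjOn u s) (σ : ι → K) :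
    ∑ j ∈ s, (σ j - 1) * ∏ l ∈ s.erase j, (u j - σ l * u l) / (u j - u l) = ∏ j ∈ s, σ j - 1 := by
  induction s using Finset.induction_on with
  | empty => simp
  | insert a s ha ih =>
    have hus : Set.InjOn u s := hu.mono (coe_subset.2 (subset_insert a s))
    have hua : ∀ j ∈ s, u a ≠ u j := fun j hj h =>
      ha (hu (mem_insert_self a s) (mem_insert_of_mem hj) h ▸ hj)
    set P : ι → K := fun j => ∏ l ∈ s.erase j, (u j - σ l * u l) / (u j - u l)
    have hsplit : ∀ j ∈ s, (σ j - 1) * ∏ l ∈ (insert a s).erase j, (u j - σ l * u l) / (u j - u l)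
        = (σ j - 1) * ((u j - σ a * u a) / (u j - u a) * P j) := by
      intro j hj
      rw [erase_insert_of_ne (ne_of_mem_of_not_mem hj ha).symm,
        prod_insert fun h => ha (mem_of_mem_erase h)]
    have hterm : ∀ j ∈ s, (σ a - 1) * ((u j - σ j * u j) / (u a - u j) * P j)
        + (σ j - 1) * ((u j - σ a * u a) / (u j - u a) * P j) = σ a * ((σ j - 1) * P j) := by
      intro j hj
      have h₁ : u a - u j ≠ 0 := sub_ne_zero.2 (hua j hj)
      have h₂ : u j - u a ≠ 0 := sub_ne_zero.2 (hua j hj).symm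
      field_simp
      ring
    rw [sum_insert ha, erase_insert ha, sum_congr rfl hsplit,
      prod_sub_div_sub_eq_one_add_sum hus (fun l => σ l * u l) hua, mul_add, mul_one, mul_sum,
      add_assoc, ← sum_add_distrib, sum_congr rfl hterm, ← mul_sum, ih hus, prod_insert ha]
    ring

theorem mul_prod_sub_one_mul_prod_sub_eq {s : Finset ι} {u : ι → K} (hu : Set.InjOn u s)
    (σ : ι → K) (a w : K) :
    (a * ∏ l ∈ s, σ l - 1) * ∏ l ∈ s, (w - u l)
      = (a - 1) * ∏ l ∈ s, (w - σ l * u l)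
        - ∑ j ∈ s, (σ j - 1) * (u j - a * w) *
            ∏ l ∈ s.erase j, (w - u l) * ((u j - σ l * u l) / (u j - u l)) := by
  set L : ι → K := fun j => ∏ l ∈ s.erase j, (w - u l) / (u j - u l)
  set Q : ι → K := fun j => ∏ l ∈ s.erase j, (u j - σ l * u l) / (u j - u l)
  have hterm : ∀ j ∈ s, (σ j - 1) * (u j - a * w) *
        ∏ l ∈ s.erase j, (w - u l) * ((u j - σ l * u l) / (u j - u l))
      = (a - 1) * ((∏ l ∈ s, (u j - σ l * u l)) * L j)
        - a * (∏ l ∈ s, (w - u l)) * ((σ j - 1) * Q j) := by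
    intro j hj
    have hR₁ : ∏ l ∈ s.erase j, (w - u l) * ((u j - σ l * u l) / (u j - u l))
        = (∏ l ∈ s.erase j, (w - u l)) * Q j := prod_mul_distrib
    have hR₂ : ∏ l ∈ s.erase j, (w - u l) * ((u j - σ l * u l) / (u j - u l))
        = (∏ l ∈ s.erase j, (u j - σ l * u l)) * L j := by
      rw [← prod_mul_distrib]
      exact prod_congr rfl fun l _ => by ring
    have hW := (mul_prod_erase s (fun l => w - u l) hj).symm
    have hM := (mul_prod_erase s (fun l => u j - σ l * u l) hj).symm
    linear_combination (σ j - 1) * (1 - a) * u j * hR₂ - a * (σ j - 1) * (w - u j) * hR₁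
      - (a - 1) * L j * hM + a * (σ j - 1) * Q j * hW
  have hinterp : ∏ l ∈ s, (w - σ l * u l)
      = ∏ l ∈ s, (w - u l) + ∑ j ∈ s, (∏ l ∈ s, (u j - σ l * u l)) * L j :=
    prod_sub_eq_prod_sub_add_sum_mul_prod_div hu (fun l => σ l * u l) w
  have hcore : ∑ j ∈ s, (σ j - 1) * Q j = ∏ l ∈ s, σ l - 1 :=
    sum_sub_one_mul_prod_div_eq_prod_sub_one hu σ
  rw [sum_congr rfl hterm, sum_sub_distrib, ← mul_sum, ← mul_sum]
  linear_combination -(a - 1) * hinterp - a * (∏ l ∈ s, (w - u l)) * hcore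

theorem mul_prod_sub_one_mul_prod_mul_sub_eq {s : Finset ι} {σ : ι → K}
    (hσ : ∀ l ∈ s, σ l ≠ 0) {a : K} (ha : a ≠ 0) {x : ι → K}
    (hx : ∀ j ∈ s, ∀ l ∈ s, j ≠ l → σ l * x j - σ j * x l ≠ 0) (y : K) :
    (a * ∏ l ∈ s, σ l - 1) * ∏ l ∈ s, (σ l * y - a * x l)
      = (1 - a⁻¹) * (a * ∏ l ∈ s, σ l) * ∏ l ∈ s, (y - a * x l)
        - (a * ∏ l ∈ s, σ l) * ∑ j ∈ s, (1 - (σ j)⁻¹) * (x j - σ j * y) *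
            ∏ l ∈ s.erase j, (σ l * y - a * x l) * ((x j - σ j * x l) / (σ l * x j - σ j * x l)) := by
  set u : ι → K := fun l => a * x l / σ l
  have hu : Set.InjOn u s := by
    intro j hj l hl h
    by_contra hjl
    refine hx j hj l hl hjl ?_
    have hcross := (div_eq_div_iff (hσ j hj) (hσ l hl)).1 h
    linear_combination mul_left_cancel₀ ha (by linear_combination hcross :
      a * (σ l * x j) = a * (σ j * x l))
  have hlhs : ∀ l ∈ s, σ l * y - a * x l = σ l * (y - u l) := fun l hl => by
    simp only [u]; field_simp [hσ l hl]
  have hrhs : ∀ l ∈ s, y - a * x l = y - σ l * u l := fun l hl => by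
    simp only [u]; field_simp [hσ l hl]
  have hfactor : ∀ j ∈ s, ∀ l ∈ s.erase j,
      (σ l * y - a * x l) * ((x j - σ j * x l) / (σ l * x j - σ j * x l))
        = (y - u l) * ((u j - σ l * u l) / (u j - u l)) := fun j hj l hl => by
    simp only [u]; field_simp [hσ l (mem_of_mem_erase hl), hσ j hj]
  have hweight : ∀ j ∈ s, (1 - (σ j)⁻¹) * (x j - σ j * y)
      = a⁻¹ * ((σ j - 1) * (u j - a * y)) := fun j hj => by
    simp only [u]; field_simp [hσ j hj]
  rw [prod_congr rfl hlhs, prod_mul_distrib, prod_congr rfl hrhs,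
    sum_congr rfl fun j hj => by rw [hweight j hj, prod_congr rfl (hfactor j hj), mul_assoc],
    ← mul_sum]
  linear_combination (∏ l ∈ s, σ l) * mul_prod_sub_one_mul_prod_sub_eq hu σ a y
    + (∏ l ∈ s, σ l) * (∏ l ∈ s, (y - σ l * u l) + ∑ j ∈ s, (σ j - 1) * (u j - a * y) *
        ∏ l ∈ s.erase j, (y - u l) * ((u j - σ l * u l) / (u j - u l))) * mul_inv_cancel₀ ha

end

/-- the cleared-denominator identity (C.5)/(3.65) of the paper,
as an identity of rational functions in `x₁` (here the free variable `y`). -/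
theorem dell_identity_x65 {K : Type*} [Field K] (t : K) (ht : t ≠ 0)
    (N : ℕ) (hN : 2 ≤ N) (x : ℕ → K) (n : ℕ → ℤ)
    (hden : ∀ j ∈ Finset.Icc 2 N, ∀ l ∈ Finset.Icc 2 N, j ≠ l →
      t ^ (n l) * x j - t ^ (n j) * x l ≠ 0) :
    ∀ y : K,
      (t ^ (∑ i ∈ Finset.Icc 1 N, n i) - 1) *
          ∏ l ∈ Finset.Icc 2 N, (t ^ (n l) * y - t ^ (n 1) * x l)
        = (1 - t ^ (-(n 1))) * t ^ (∑ i ∈ Finset.Icc 1 N, n i) *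
            ∏ l ∈ Finset.Icc 2 N, (y - t ^ (n 1) * x l)
          - t ^ (∑ i ∈ Finset.Icc 1 N, n i) *
              ∑ j ∈ Finset.Icc 2 N, (1 - t ^ (-(n j))) * (x j - t ^ (n j) * y) *
                ∏ l ∈ (Finset.Icc 2 N).erase j,
                  (t ^ (n l) * y - t ^ (n 1) * x l) *
                    ((x j - t ^ (n j) * x l) / (t ^ (n l) * x j - t ^ (n j) * x l)) := by
  intro y
  have hIcc : Icc 1 N = insert 1 (Icc 2 N) := by
    ext i
    simp only [mem_Icc, mem_insert]
    omega
  rw [hIcc, sum_insert (by simp), zpow_add₀ ht, zpow_sum₀ ht]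
  simp only [zpow_neg]
  exact mul_prod_sub_one_mul_prod_mul_sub_eq (fun l _ => zpow_ne_zero _ ht)
    (zpow_ne_zero _ ht) hden y
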